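/- Let P¹ and P² be deterministic parity automata over the same finite alphabet Σ. Then L(P¹) \ L(P²) is nonempty if and only if there exist a finite word u ∈ Σ^* and a nonempty finite word w ∈ Σ^+ such that the ultimately periodic word u·w^ω is accepted by P¹ and rejected by P². -/

import Mathlib

/-- The run of a deterministic automaton with transition function `δ` from
state `q₀` on the infinite word `x`. -/
def parityRun {A Q : Type*} (δ : Q → A → Q) (q₀ : Q) (x : ℕ → A) : ℕ → Q
  | 0 => q₀
  | n + 1 => δ (parityRun δ q₀ x n) (x n)

/-- The deterministic parity automaton `(Q, δ, q₀, π)` accepts the infinite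
word `x` iff the maximum priority occurring infinitely often along the run is
even. -/
def ParityAccepts {A Q : Type*} (δ : Q → A → Q) (q₀ : Q) (π : Q → ℕ)
    (x : ℕ → A) : Prop :=
  ∃ p : ℕ, IsGreatest {p : ℕ | {n : ℕ | π (parityRun δ q₀ x n) = p}.Infinite} p ∧ Even p

/-- The ultimately periodic word `u·w^ω` (for a nonempty `w`). -/
def upWord {A : Type*} (u w : List A) (hw : 0 < w.length) (n : ℕ) : A :=
  if h : n < u.length then u[n]
  else w[(n - u.length) % w.length]'(Nat.mod_lt _ hw)

/-!
Run the two automata side by side on a word `α` in `L(P¹) \ L(P²)`. Past some point `N` the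
priorities of the two runs stay below their limit priorities `p₁` (even) and `p₂` (odd). By
pigeonhole the pair of states at some `i ≥ N` recurs at some `j > i` such that both `p₁` and `p₂`
are visited in `[i, j)`. On the lasso word `α[0, i) · α[i, j)^ω` each run retraces the segment
`[i, j)` of the original run forever, so its limit priority is again `p₁`, resp. `p₂`.
-/

open Filter

section InfinitelyOften

variable {β : Type*}

def infinitelyOftenValues (f : ℕ → β) : Set β := {b | {n | f n = b}.Infinite}

theorem infinitelyOftenValues_subset_range (f : ℕ → β) :
    infinitelyOftenValues f ⊆ Set.range f := fun _ hb =>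
  let ⟨n, hn⟩ := hb.nonempty
  ⟨n, hn⟩

theorem exists_isGreatest_infinitelyOftenValues [LinearOrder β] {f : ℕ → β}
    (hf : (Set.range f).Finite) :
    ∃ p, IsGreatest (infinitelyOftenValues f) p := by
  have : Finite (Set.range f) := hf.to_subtype
  obtain ⟨⟨b, _⟩, hb⟩ := Finite.exists_infinite_fiber (Set.rangeFactorization f)
  have hne : (infinitelyOftenValues f).Nonempty := by
    refine ⟨b, (Set.infinite_coe_iff.mp hb).mono fun n hn => ?_⟩
    simpa [Set.rangeFactorization] using hn
  obtain ⟨p, hp, hmax⟩ :=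
    Set.exists_max_image _ id (hf.subset (infinitelyOftenValues_subset_range f)) hne
  exact ⟨p, hp, hmax⟩

theorem eventually_le_of_isGreatest_infinitelyOftenValues [LinearOrder β] {f : ℕ → β}
    (hf : (Set.range f).Finite) {p : β} (hp : IsGreatest (infinitelyOftenValues f) p) :
    ∀ᶠ n in atTop, f n ≤ p := by
  have hfin : {n | p < f n}.Finite := by
    refine ((hf.inter_of_left (Set.Ioi p)).biUnion (t := fun b => {n | f n = b})
      fun b hb => ?_).subset fun n hn => ?_
    · exact Set.not_infinite.mp fun h => (hp.2 h).not_gt hb.2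
    · exact Set.mem_biUnion (x := f n) ⟨⟨n, rfl⟩, hn⟩ rfl
  rw [← Nat.cofinite_eq_atTop]
  exact hfin.eventually_cofinite_notMem.mono fun n hn => not_lt.1 hn

end InfinitelyOften

section Lasso

def lassoIndex (i L n : ℕ) : ℕ := if n < i then n else i + (n - i) % L

variable {i L : ℕ}

theorem lassoIndex_zero : lassoIndex i L 0 = 0 := by
  rcases Nat.eq_zero_or_pos i with rfl | hi <;> simp [lassoIndex, *]

theorem lassoIndex_succ (hL : 0 < L) (n : ℕ) :
    lassoIndex i L (n + 1) =
      if lassoIndex i L n + 1 = i + L then i else lassoIndex i L n + 1 := by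
  rcases lt_or_ge n i with hn | hn
  · have hwrap : ¬ n + 1 = i + L := by omega
    rcases (Nat.succ_le_of_lt hn).lt_or_eq with h | h
    · simp [lassoIndex, hn, h, hwrap]
    · simp [lassoIndex, ← h]
  · have hsucc : n + 1 - i = L * ((n - i) / L) + ((n - i) % L + 1) := by
      have := Nat.div_add_mod (n - i) L
      omega
    simp only [lassoIndex, if_neg (by omega : ¬ n + 1 < i), if_neg (not_lt.2 hn), hsucc,
      Nat.mul_add_mod]
    rcases Nat.lt_or_ge ((n - i) % L + 1) L with h | h
    · rw [Nat.mod_eq_of_lt h, if_neg (by omega)]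
      omega
    · have h : (n - i) % L + 1 = L := le_antisymm (Nat.mod_lt _ hL) h
      rw [h, Nat.mod_self, if_pos (by omega), Nat.add_zero]

theorem lassoIndex_mem_Ico (hL : 0 < L) {n : ℕ} (hn : i ≤ n) :
    lassoIndex i L n ∈ Set.Ico i (i + L) := by
  have := Nat.mod_lt (n - i) hL
  simp only [lassoIndex, if_neg (not_lt.2 hn), Set.mem_Ico]
  omega

theorem lassoIndex_add_mul {m : ℕ} (hm : m ∈ Set.Ico i (i + L)) (k : ℕ) :
    lassoIndex i L (m + k * L) = m := by
  obtain ⟨him, hmL⟩ := hm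
  have : m + k * L - i = (m - i) + k * L := by omega
  simp only [lassoIndex, if_neg (by omega : ¬ m + k * L < i), this, Nat.add_mul_mod_self_right,
    Nat.mod_eq_of_lt (by omega : m - i < L)]
  omega

theorem infinitelyOftenValues_comp_lassoIndex {β : Type*} (f : ℕ → β)
    (hL : 0 < L) : infinitelyOftenValues (f ∘ lassoIndex i L) = f '' Set.Ico i (i + L) := by
  ext b
  constructor
  · intro hb
    obtain ⟨n, hn, hin⟩ := Set.Infinite.exists_gt hb i
    exact ⟨_, lassoIndex_mem_Ico hL hin.le, hn⟩
  · rintro ⟨m, hm, rfl⟩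
    refine Set.infinite_of_injective_forall_mem (f := fun k => m + k * L) (fun a b h => ?_)
      fun k => ?_
    · exact Nat.eq_of_mul_eq_mul_right hL (Nat.add_left_cancel h)
    · simp [lassoIndex_add_mul hm]

theorem upWord_ofFn {A : Type*} (α : ℕ → A)
    (hw : 0 < (List.ofFn fun k : Fin L => α (i + k)).length) :
    upWord (List.ofFn fun k : Fin i => α k) (List.ofFn fun k : Fin L => α (i + k)) hw =
      α ∘ lassoIndex i L := by
  funext n
  by_cases h : n < i <;> simp [upWord, lassoIndex, h]

end Lasso

section Automaton

variable {A Q : Type*} {δ : Q → A → Q} {q₀ : Q} {π : Q → ℕ}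

theorem parityAccepts_iff_of_isGreatest {x : ℕ → A} {p : ℕ}
    (hp : IsGreatest (infinitelyOftenValues (π ∘ parityRun δ q₀ x)) p) :
    ParityAccepts δ q₀ π x ↔ Even p :=
  ⟨fun ⟨_, hp', he⟩ => hp'.unique hp ▸ he, fun he => ⟨p, hp, he⟩⟩

theorem exists_limit_priority [Finite Q] (δ : Q → A → Q) (q₀ : Q) (π : Q → ℕ) (x : ℕ → A) :
    ∃ p, (ParityAccepts δ q₀ π x ↔ Even p) ∧ {n | π (parityRun δ q₀ x n) = p}.Infinite ∧
      ∀ᶠ n in atTop, π (parityRun δ q₀ x n) ≤ p := by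
  have hfin : (Set.range (π ∘ parityRun δ q₀ x)).Finite :=
    (Set.finite_range π).subset (Set.range_comp_subset_range _ _)
  obtain ⟨p, hp⟩ := exists_isGreatest_infinitelyOftenValues hfin
  exact ⟨p, parityAccepts_iff_of_isGreatest hp, hp.1,
    eventually_le_of_isGreatest_infinitelyOftenValues hfin hp⟩

variable {α : ℕ → A} {i L : ℕ}

theorem parityRun_comp_lassoIndex (hL : 0 < L)
    (hloop : parityRun δ q₀ α (i + L) = parityRun δ q₀ α i) (n : ℕ) :
    parityRun δ q₀ (α ∘ lassoIndex i L) n = parityRun δ q₀ α (lassoIndex i L n) := by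
  induction n with
  | zero => rw [lassoIndex_zero]; rfl
  | succ n ih =>
    rw [lassoIndex_succ hL]
    split_ifs with h
    · rw [← hloop, ← h]
      simp [parityRun, ih]
    · simp [parityRun, ih]

theorem parityAccepts_comp_lassoIndex_iff (hL : 0 < L)
    (hloop : parityRun δ q₀ α (i + L) = parityRun δ q₀ α i) {p : ℕ}
    (hle : ∀ n, i ≤ n → π (parityRun δ q₀ α n) ≤ p)
    (hvisit : ∃ m ∈ Set.Ico i (i + L), π (parityRun δ q₀ α m) = p) :
    ParityAccepts δ q₀ π (α ∘ lassoIndex i L) ↔ Even p := by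
  have hrun : π ∘ parityRun δ q₀ (α ∘ lassoIndex i L) = (π ∘ parityRun δ q₀ α) ∘ lassoIndex i L :=
    funext fun n => congrArg π (parityRun_comp_lassoIndex hL hloop n)
  refine parityAccepts_iff_of_isGreatest ?_
  rw [hrun, infinitelyOftenValues_comp_lassoIndex _ hL]
  exact ⟨hvisit, Set.forall_mem_image.2 fun n hn => hle n hn.1⟩

end Automaton

theorem exists_loop_meeting {Q : Type*} [Finite Q] (r : ℕ → Q) (N : ℕ) {S T : Set ℕ}
    (hS : S.Infinite) (hT : T.Infinite) :
    ∃ i L, N ≤ i ∧ 0 < L ∧ r (i + L) = r i ∧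
      (∃ m ∈ Set.Ico i (i + L), m ∈ S) ∧ ∃ m ∈ Set.Ico i (i + L), m ∈ T := by
  obtain ⟨q, hq⟩ := Finite.exists_infinite_fiber r
  have hq : (r ⁻¹' {q}).Infinite := Set.infinite_coe_iff.mp hq
  obtain ⟨i, hi, hNi⟩ := hq.exists_gt N
  obtain ⟨s, hs, his⟩ := hS.exists_gt i
  obtain ⟨t, ht, hit⟩ := hT.exists_gt i
  obtain ⟨j, hj, hj'⟩ := hq.exists_gt (max s t)
  refine ⟨i, j - i, hNi.le, by omega, ?_, ⟨s, ⟨his.le, by omega⟩, hs⟩, t, ⟨hit.le, by omega⟩, ht⟩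
  rw [Nat.add_sub_cancel' (by omega)]
  exact hj.trans hi.symm

theorem diff_nonempty_iff_ultimately_periodic_witness_general
    {A Q₁ Q₂ : Type} [Fintype Q₁] [Fintype Q₂]
    (δ₁ : Q₁ → A → Q₁) (q₁ : Q₁) (π₁ : Q₁ → ℕ)
    (δ₂ : Q₂ → A → Q₂) (q₂ : Q₂) (π₂ : Q₂ → ℕ) :
    (∃ α : ℕ → A, ParityAccepts δ₁ q₁ π₁ α ∧ ¬ ParityAccepts δ₂ q₂ π₂ α) ↔
    (∃ (u w : List A) (hw : w ≠ []),
      ParityAccepts δ₁ q₁ π₁ (upWord u w (List.length_pos_iff.mpr hw)) ∧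
      ¬ ParityAccepts δ₂ q₂ π₂ (upWord u w (List.length_pos_iff.mpr hw))) := by
  refine ⟨fun ⟨α, hacc, hrej⟩ => ?_, fun ⟨_, _, _, hacc, hrej⟩ => ⟨_, hacc, hrej⟩⟩
  obtain ⟨p₁, hacc₁, hinf₁, hle₁⟩ := exists_limit_priority δ₁ q₁ π₁ α
  obtain ⟨p₂, hacc₂, hinf₂, hle₂⟩ := exists_limit_priority δ₂ q₂ π₂ α
  obtain ⟨N, hN⟩ := eventually_atTop.1 (hle₁.and hle₂)
  obtain ⟨i, L, hNi, hL, hloop, hvisit₁, hvisit₂⟩ :=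
    exists_loop_meeting (fun n => (parityRun δ₁ q₁ α n, parityRun δ₂ q₂ α n)) N hinf₁ hinf₂
  have hw : List.ofFn (fun k : Fin L => α (i + k)) ≠ [] := by simpa using hL.ne'
  refine ⟨List.ofFn fun k : Fin i => α k, _, hw, ?_⟩
  rw [upWord_ofFn, parityAccepts_comp_lassoIndex_iff hL (Prod.ext_iff.1 hloop).1
      (fun n hn => (hN n (hNi.trans hn)).1) hvisit₁,
    parityAccepts_comp_lassoIndex_iff hL (Prod.ext_iff.1 hloop).2
      (fun n hn => (hN n (hNi.trans hn)).2) hvisit₂, ← hacc₁, ← hacc₂]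
  exact ⟨hacc, hrej⟩

theorem diff_nonempty_iff_ultimately_periodic_witness
    {A Q₁ Q₂ : Type} [Fintype A] [Fintype Q₁] [Fintype Q₂]
    (δ₁ : Q₁ → A → Q₁) (q₁ : Q₁) (π₁ : Q₁ → ℕ)
    (δ₂ : Q₂ → A → Q₂) (q₂ : Q₂) (π₂ : Q₂ → ℕ) :
    (∃ α : ℕ → A, ParityAccepts δ₁ q₁ π₁ α ∧ ¬ ParityAccepts δ₂ q₂ π₂ α) ↔
    (∃ (u w : List A) (hw : w ≠ []),
      ParityAccepts δ₁ q₁ π₁ (upWord u w (List.length_pos_iff.mpr hw)) ∧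
      ¬ ParityAccepts δ₂ q₂ π₂ (upWord u w (List.length_pos_iff.mpr hw))) :=
  diff_nonempty_iff_ultimately_periodic_witness_general δ₁ q₁ π₁ δ₂ q₂ π₂
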